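/- Let ψ : ℝ^m → ℝ be differentiable and ρ-strongly convex w.r.t. a norm ‖·‖, R : ℝ^m → ℝ differentiable, β-smooth w.r.t. ‖·‖, and convex. For the mirror descent step ∇ψ(α_{t+1}) = ∇ψ(α_t) − η∇R(α_t) with 0 < η ≤ ρ/β, the empirical risk is nonincreasing: R(α_{t+1}) ≤ R(α_t). -/

import Mathlib

/-!
Adding the two strong-convexity inequalities `D_ψ(α_{t+1}, α_t)` and `D_ψ(α_t, α_{t+1})` makes
the Bregman terms collapse to `⟪∇ψ(α_{t+1}) - ∇ψ(α_t), α_{t+1} - α_t⟫`, which the update rule turns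
into `-η ⟪∇R(α_t), α_{t+1} - α_t⟫`. Hence the linear term of the smoothness bound is at most
`-(ρ/η) N²`, and `η ≤ ρ/β` makes it beat the quadratic term `(β/2) N²`.
-/

open scoped RealInnerProductSpace

section MirrorDescent

variable {E : Type*} [NormedAddCommGroup E] [InnerProductSpace ℝ E]

noncomputable def bregmanDiv (ψ : E → ℝ) (g : E → E) (a b : E) : ℝ :=
  ψ a - ψ b - ⟪g b, a - b⟫

theorem bregmanDiv_add_bregmanDiv_swap (ψ : E → ℝ) (g : E → E) (a b : E) :
    bregmanDiv ψ g a b + bregmanDiv ψ g b a = ⟪g a - g b, a - b⟫ := by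
  rw [bregmanDiv, bregmanDiv, ← neg_sub a b, inner_neg_right, inner_sub_left]
  ring

theorem mul_sq_le_inner_sub_of_le_bregmanDiv {ψ : E → ℝ} {g : E → E} {N : E → ℝ}
    (hN : ∀ v, N (-v) = N v) {ρ : ℝ}
    (hstrong : ∀ a b, ρ / 2 * N (a - b) ^ 2 ≤ bregmanDiv ψ g a b) (a b : E) :
    ρ * N (a - b) ^ 2 ≤ ⟪g a - g b, a - b⟫ := by
  have hswap := hstrong b a
  rw [← neg_sub a b, hN] at hswap
  linarith [hstrong a b, bregmanDiv_add_bregmanDiv_swap ψ g a b]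

theorem inner_sub_eq_of_mirror_step {g : E → E} {a a' v : E} {η : ℝ}
    (hstep : g a' = g a - η • v) :
    ⟪g a' - g a, a' - a⟫ = -(η * ⟪v, a' - a⟫) := by
  rw [hstep, sub_sub_cancel_left, inner_neg_left, real_inner_smul_left]

theorem le_of_smooth_of_mul_sq_le_neg_inner {R : E → ℝ} {gR : E → E} {N : E → ℝ}
    {a a' : E} {β η ρ : ℝ} (hβ : 0 < β) (hη : 0 < η) (hηβ : η ≤ ρ / β)
    (hsmooth : R a' ≤ R a + ⟪gR a, a' - a⟫ + β / 2 * N (a' - a) ^ 2)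
    (hinner : ρ * N (a' - a) ^ 2 ≤ -(η * ⟪gR a, a' - a⟫)) :
    R a' ≤ R a := by
  have hηβ' : η * β ≤ ρ := (le_div_iff₀ hβ).mp hηβ
  have hsq : 0 ≤ N (a' - a) ^ 2 := sq_nonneg _
  nlinarith [mul_le_mul_of_nonneg_left hsmooth hη.le, mul_pos hη hβ]

end MirrorDescent

theorem mirror_descent_risk_nonincreasing_general {m : ℕ}
    (ψ R : EuclideanSpace ℝ (Fin m) → ℝ)
    (gψ gR : EuclideanSpace ℝ (Fin m) → EuclideanSpace ℝ (Fin m))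
    (N : EuclideanSpace ℝ (Fin m) → ℝ)
    (hNsymm : ∀ v, N (-v) = N v)
    (Dψ : EuclideanSpace ℝ (Fin m) → EuclideanSpace ℝ (Fin m) → ℝ)
    (hD : ∀ a b, Dψ a b = ψ a - ψ b - ⟪gψ b, a - b⟫)
    (ρ β : ℝ) (hβ : 0 < β)
    (hstrong : ∀ a b, Dψ a b ≥ ρ / 2 * N (a - b) ^ 2)
    (hsmooth : ∀ a b, R a ≤ R b + ⟪gR b, a - b⟫ + β / 2 * N (a - b) ^ 2)
    (η : ℝ) (hη : 0 < η) (hηβ : η ≤ ρ / β)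
    (αt αt1 : EuclideanSpace ℝ (Fin m))
    (hupdate : gψ αt1 = gψ αt - η • gR αt) :
    R αt1 ≤ R αt := by
  have hDψ : Dψ = bregmanDiv ψ gψ := funext₂ hD
  subst hDψ
  refine le_of_smooth_of_mul_sq_le_neg_inner hβ hη hηβ (hsmooth αt1 αt) ?_
  calc ρ * N (αt1 - αt) ^ 2 ≤ ⟪gψ αt1 - gψ αt, αt1 - αt⟫ :=
        mul_sq_le_inner_sub_of_le_bregmanDiv hNsymm hstrong αt1 αt
    _ = -(η * ⟪gR αt, αt1 - αt⟫) := inner_sub_eq_of_mirror_step hupdate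

/-- Risk monotonicity of mirror descent: under `ρ`-strong convexity of `ψ`, `β`-smoothness
and convexity of `R` w.r.t. a norm `N`, and step size `0 < η ≤ ρ/β`, one mirror descent step
does not increase the empirical risk: `R(α_{t+1}) ≤ R(α_t)`. -/
theorem mirror_descent_risk_nonincreasing {m : ℕ}
    (ψ R : EuclideanSpace ℝ (Fin m) → ℝ)
    (gψ gR : EuclideanSpace ℝ (Fin m) → EuclideanSpace ℝ (Fin m))
    (hψgrad : ∀ x, HasGradientAt ψ (gψ x) x)
    (hRgrad : ∀ x, HasGradientAt R (gR x) x)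
    (hRconv : ConvexOn ℝ Set.univ R)
    (N : EuclideanSpace ℝ (Fin m) → ℝ)
    (hNsymm : ∀ v, N (-v) = N v)
    (Dψ : EuclideanSpace ℝ (Fin m) → EuclideanSpace ℝ (Fin m) → ℝ)
    (hD : ∀ a b, Dψ a b = ψ a - ψ b - ⟪gψ b, a - b⟫)
    (ρ β : ℝ) (hρ : 0 < ρ) (hβ : 0 < β)
    (hstrong : ∀ a b, Dψ a b ≥ ρ / 2 * N (a - b) ^ 2)
    (hsmooth : ∀ a b, R a ≤ R b + ⟪gR b, a - b⟫ + β / 2 * N (a - b) ^ 2)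
    (η : ℝ) (hη : 0 < η) (hηβ : η ≤ ρ / β)
    (αt αt1 : EuclideanSpace ℝ (Fin m))
    (hupdate : gψ αt1 = gψ αt - η • gR αt) :
    R αt1 ≤ R αt :=
  mirror_descent_risk_nonincreasing_general ψ R gψ gR N hNsymm Dψ hD ρ β hβ hstrong hsmooth η hη hηβ
    αt αt1 hupdate
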